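/- arXiv:2312.12945 — 3 statements merged into one kernel-verified Lean document; each statement's English description precedes it below -/
import Mathlib

section
/- Suppose in the 1-bit matrix completion model with logistic link that the low-noise condition holds: |f(X*_{ij}) - 1/2| ≥ 1/(2c) for all (i,j), for some c > 0. Then the excess risk of η̂ = sign(X̂) satisfies R(η̂) - R(η*) ≤ (c/(4 m₁ m₂)) ‖X̂ - X*‖_F². -/
noncomputable def logistic (x : ℝ) : ℝ := Real.exp x / (1 + Real.exp x)

noncomputable def sgn (x : ℝ) : ℝ := if 0 ≤ x then 1 else -1

/-- Misclassification risk R(η) = P(Y ≠ η(ω)) in the 1-bit matrix completion model: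
ω uniform on [m₁] × [m₂] and, given ω, Y = 1 with probability f(X*_ω), Y = -1 otherwise. -/
noncomputable def Risk {m₁ m₂ : ℕ} (Xs : Matrix (Fin m₁) (Fin m₂) ℝ)
    (η : Fin m₁ → Fin m₂ → ℝ) : ℝ :=
  (1 / (m₁ * m₂ : ℝ)) * ∑ i, ∑ j,
    (logistic (Xs i j) * (if η i j = 1 then 0 else 1) +
      (1 - logistic (Xs i j)) * (if η i j = -1 then 0 else 1))

noncomputable def frobeniusNorm {m₁ m₂ : ℕ} (X : Matrix (Fin m₁) (Fin m₂) ℝ) : ℝ :=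
  Real.sqrt (∑ i, ∑ j, (X i j) ^ 2)

lemma sinh_le_mul_cosh {t : ℝ} (ht : 0 ≤ t) : Real.sinh t ≤ t * Real.cosh t := by
  have key : MonotoneOn (fun x : ℝ => x * Real.cosh x - Real.sinh x) (Set.Ici 0) := by
    apply monotoneOn_of_deriv_nonneg (convex_Ici 0)
    · fun_prop
    · intro x hx
      exact ((differentiable_id.mul Real.differentiable_cosh).sub
        Real.differentiable_sinh).differentiableAt.differentiableWithinAt
    · intro x hx
      have hx0 : 0 < x := by simpa using hx
      have hd : HasDerivAt (fun x : ℝ => x * Real.cosh x - Real.sinh x)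
          (1 * Real.cosh x + x * Real.sinh x - Real.cosh x) x :=
        ((hasDerivAt_id x).mul (Real.hasDerivAt_cosh x)).sub (Real.hasDerivAt_sinh x)
      rw [hd.deriv]
      have : 0 ≤ x * Real.sinh x :=
        mul_nonneg hx0.le (Real.sinh_nonneg_iff.mpr hx0.le)
      nlinarith
  have := key (Set.self_mem_Ici) (by exact ht) ht
  simpa using this

/-- Key analytic bound: 2(e^b - 1) ≤ b (1 + e^b) for b ≥ 0. -/
lemma exp_ineq {b : ℝ} (hb : 0 ≤ b) : 2 * (Real.exp b - 1) ≤ b * (1 + Real.exp b) := by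
  have h := sinh_le_mul_cosh (t := b / 2) (by linarith)
  rw [Real.sinh_eq, Real.cosh_eq] at h
  have he : 0 < Real.exp (b / 2) := Real.exp_pos _
  have hmul : (Real.exp (b / 2) - Real.exp (-(b / 2))) * Real.exp (b / 2) ≤
      (b / 2) * ((Real.exp (b / 2) + Real.exp (-(b / 2))) * Real.exp (b / 2)) := by
    nlinarith [h]
  have h1 : Real.exp (b / 2) * Real.exp (b / 2) = Real.exp b := by
    rw [← Real.exp_add]; ring_nf
  have h2 : Real.exp (-(b / 2)) * Real.exp (b / 2) = 1 := by
    rw [← Real.exp_add]; simp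
  nlinarith [hmul]

lemma logistic_ge_half {b : ℝ} (hb : 0 ≤ b) : 1 / 2 ≤ logistic b := by
  have hexp : (1:ℝ) ≤ Real.exp b := Real.one_le_exp hb
  have he : (0:ℝ) < 1 + Real.exp b := by positivity
  rw [logistic, le_div_iff₀ he]; nlinarith

lemma logistic_le_half {b : ℝ} (hb : b ≤ 0) : logistic b ≤ 1 / 2 := by
  have hexp : Real.exp b ≤ 1 := Real.exp_le_one_iff.mpr hb
  have he : (0:ℝ) < 1 + Real.exp b := by positivity
  rw [logistic, div_le_iff₀ he]; nlinarith

lemma logistic_sub_half_le {b : ℝ} (hb : 0 ≤ b) : logistic b - 1 / 2 ≤ b / 4 := by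
  have he : (0:ℝ) < 1 + Real.exp b := by positivity
  have h := exp_ineq hb
  rw [logistic, sub_le_iff_le_add, div_le_iff₀ he]
  nlinarith

lemma logistic_neg {b : ℝ} : logistic (-b) = 1 - logistic b := by
  have he : (0:ℝ) < 1 + Real.exp b := by positivity
  have he2 : (0:ℝ) < Real.exp b := Real.exp_pos b
  rw [logistic, logistic, Real.exp_neg]
  field_simp
  ring

lemma logistic_half_le {b : ℝ} : |logistic b - 1 / 2| ≤ |b| / 4 := by
  rcases le_total 0 b with hb | hb
  · rw [abs_of_nonneg hb, abs_of_nonneg (by linarith [logistic_ge_half hb])]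
    exact logistic_sub_half_le hb
  · have hb' : 0 ≤ -b := by linarith
    have h1 := logistic_sub_half_le hb'
    rw [logistic_neg] at h1
    rw [abs_of_nonpos hb, abs_of_nonpos (by linarith [logistic_le_half hb])]
    linarith

lemma pointwise_bound (b a c : ℝ) (hc : 0 < c) (hln : 1 / (2 * c) ≤ |logistic b - 1 / 2|) :
    (logistic b * (if sgn a = 1 then 0 else 1) +
      (1 - logistic b) * (if sgn a = -1 then 0 else 1)) -
    (logistic b * (if sgn b = 1 then 0 else 1) +
      (1 - logistic b) * (if sgn b = -1 then 0 else 1)) ≤ c / 4 * (a - b) ^ 2 := by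
  have hsq : 0 ≤ c / 4 * (a - b) ^ 2 := by positivity
  have hbound := logistic_half_le (b := b)
  by_cases ha : 0 ≤ a <;> by_cases hb : 0 ≤ b
  · simp only [sgn, if_pos ha, if_pos hb]; norm_num; linarith [hsq]
  · -- 0 ≤ a, b < 0 : excess = 1 - 2p
    push_neg at hb
    simp only [sgn, if_pos ha, if_neg (not_le.mpr hb)]
    norm_num
    set p := logistic b with hp
    have hup : p ≤ 1/2 := logistic_le_half hb.le
    have habs : |p - 1/2| = 1/2 - p := by rw [abs_of_nonpos (by linarith)]; ring
    rw [habs] at hln hbound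
    rw [abs_of_neg hb] at hbound
    have hd1 : 1/2 - p ≤ (a - b) / 4 := by linarith
    have h1 : 1 ≤ 2 * c * (1/2 - p) := by
      rw [div_le_iff₀ (by positivity)] at hln; linarith
    nlinarith [hln, hd1, hc.le]
  · -- a < 0, 0 ≤ b : excess = 2p - 1
    push_neg at ha
    simp only [sgn, if_neg (not_le.mpr ha), if_pos hb]
    norm_num
    set p := logistic b with hp
    have hlo : 1/2 ≤ p := logistic_ge_half hb
    have habs : |p - 1/2| = p - 1/2 := abs_of_nonneg (by linarith)
    rw [habs] at hln hbound
    rw [abs_of_nonneg hb] at hbound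
    have hd1 : p - 1/2 ≤ (b - a) / 4 := by linarith
    have h1 : 1 ≤ 2 * c * (p - 1/2) := by
      rw [div_le_iff₀ (by positivity)] at hln; linarith
    nlinarith [hln, hd1, hc.le]
  · simp only [sgn, if_neg ha, if_neg hb]; norm_num; linarith [hsq]

theorem excess_risk_low_noise_bound {m₁ m₂ : ℕ} (Xs Xh : Matrix (Fin m₁) (Fin m₂) ℝ)
    (c : ℝ) (hc : 0 < c)
    (hln : ∀ i j, 1 / (2 * c) ≤ |logistic (Xs i j) - 1 / 2|) :
    Risk Xs (fun i j => sgn (Xh i j)) - Risk Xs (fun i j => sgn (Xs i j)) ≤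
      (c / (4 * m₁ * m₂ : ℝ)) * frobeniusNorm (Xh - Xs) ^ 2 := by
  have hS : 0 ≤ ∑ i, ∑ j, ((Xh - Xs) i j) ^ 2 :=
    Finset.sum_nonneg fun i _ => Finset.sum_nonneg fun j _ => sq_nonneg _
  have hfro : frobeniusNorm (Xh - Xs) ^ 2 = ∑ i, ∑ j, ((Xh - Xs) i j) ^ 2 :=
    Real.sq_sqrt hS
  rw [hfro, Risk, Risk, ← mul_sub, ← Finset.sum_sub_distrib]
  simp_rw [← Finset.sum_sub_distrib]
  have hNinv : (0:ℝ) ≤ 1 / (m₁ * m₂ : ℝ) := by positivity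
  have hsum : ∑ i, ∑ j,
      ((logistic (Xs i j) * (if sgn (Xh i j) = 1 then 0 else 1) +
        (1 - logistic (Xs i j)) * (if sgn (Xh i j) = -1 then 0 else 1)) -
       (logistic (Xs i j) * (if sgn (Xs i j) = 1 then 0 else 1) +
        (1 - logistic (Xs i j)) * (if sgn (Xs i j) = -1 then 0 else 1))) ≤
      ∑ i, ∑ j, c / 4 * (Xh i j - Xs i j) ^ 2 := by
    apply Finset.sum_le_sum; intro i _
    apply Finset.sum_le_sum; intro j _
    exact pointwise_bound (Xs i j) (Xh i j) c hc (hln i j)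
  calc (1 / (m₁ * m₂ : ℝ)) * ∑ i, ∑ j,
      ((logistic (Xs i j) * (if sgn (Xh i j) = 1 then 0 else 1) +
        (1 - logistic (Xs i j)) * (if sgn (Xh i j) = -1 then 0 else 1)) -
       (logistic (Xs i j) * (if sgn (Xs i j) = 1 then 0 else 1) +
        (1 - logistic (Xs i j)) * (if sgn (Xs i j) = -1 then 0 else 1)))
      ≤ (1 / (m₁ * m₂ : ℝ)) * ∑ i, ∑ j, c / 4 * (Xh i j - Xs i j) ^ 2 :=
        mul_le_mul_of_nonneg_left hsum hNinv
    _ = (c / (4 * m₁ * m₂ : ℝ)) * ∑ i, ∑ j, ((Xh - Xs) i j) ^ 2 := by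
        simp_rw [← Finset.mul_sum]
        have : ∀ i j, (Xh - Xs) i j = Xh i j - Xs i j := fun i j => rfl
        simp_rw [this]
        ring
end

section
/- Let a, b ∈ [f(-γ), f(γ)] for some γ > 0 where f is the logistic function. Then the Bernoulli KL divergence satisfies KL(a,b) ≤ (a - b)²/(f(-γ)(1 - f(γ))). -/
/-- KL divergence between Bernoulli(a) and Bernoulli(b). -/
noncomputable def bernoulliKL (a b : ℝ) : ℝ :=
  a * Real.log (a / b) + (1 - a) * Real.log ((1 - a) / (1 - b))

lemma logistic_pos (x : ℝ) : 0 < logistic x := by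
  unfold logistic
  positivity

lemma logistic_lt_one (x : ℝ) : logistic x < 1 := by
  unfold logistic
  rw [div_lt_one (by positivity)]
  linarith [Real.exp_pos x]

theorem bernoulli_kl_upper (γ a b : ℝ) (hγ : 0 < γ)
    (ha : a ∈ Set.Icc (logistic (-γ)) (logistic γ))
    (hb : b ∈ Set.Icc (logistic (-γ)) (logistic γ)) :
    bernoulliKL a b ≤ (a - b) ^ 2 / (logistic (-γ) * (1 - logistic γ)) := by
  obtain ⟨ha1, ha2⟩ := ha
  obtain ⟨hb1, hb2⟩ := hb
  have hm : 0 < logistic (-γ) := logistic_pos _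
  have hM : logistic γ < 1 := logistic_lt_one _
  have ha0 : 0 < a := lt_of_lt_of_le hm ha1
  have ha1' : a < 1 := lt_of_le_of_lt ha2 hM
  have hb0 : 0 < b := lt_of_lt_of_le hm hb1
  have hb1' : b < 1 := lt_of_le_of_lt hb2 hM
  have key : bernoulliKL a b ≤ (a - b) ^ 2 / (b * (1 - b)) := by
    have h1 : Real.log (a / b) ≤ a / b - 1 :=
      Real.log_le_sub_one_of_pos (by positivity)
    have h2 : Real.log ((1 - a) / (1 - b)) ≤ (1 - a) / (1 - b) - 1 :=
      Real.log_le_sub_one_of_pos (div_pos (by linarith) (by linarith))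
    have : bernoulliKL a b ≤ a * (a / b - 1) + (1 - a) * ((1 - a) / (1 - b) - 1) := by
      unfold bernoulliKL
      gcongr <;> linarith
    refine this.trans (le_of_eq ?_)
    have hbne : b ≠ 0 := hb0.ne'
    have h1b : (1:ℝ) - b ≠ 0 := by linarith
    field_simp
    ring
  refine key.trans ?_
  have h1M : 0 < 1 - logistic γ := by linarith
  gcongr
end

section
/- Suppose the estimation error bound (1/(m₁m₂))‖X̂ - X*‖_F² ≤ ε holds. Then under the 1-bit matrix completion model with logistic link, the excess misclassification risk of η̂ = sign(X̂) satisfies R(η̂) - R(η*) ≤ (1/2)√ε; and if additionally the low-noise condition |f(X*_{ij}) - 1/2| ≥ 1/(2c) holds for all entries, then R(η̂) - R(η*) ≤ (c/4)ε. -/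
open Real Finset

lemma logistic_eq_sigmoid : logistic = sigmoid := by
  ext x
  rw [logistic, sigmoid_def, exp_neg]
  field_simp
  ring

lemma abs_sigmoid_sub_sigmoid_le (x y : ℝ) : |sigmoid x - sigmoid y| ≤ |x - y| / 4 := by
  have hderiv : ∀ z, ‖deriv sigmoid z‖ ≤ 1 / 4 := fun z => by
    have h1 : 0 ≤ 1 - sigmoid z := by linarith [sigmoid_le_one z]
    rw [deriv_sigmoid, norm_of_nonneg (mul_nonneg (sigmoid_nonneg z) h1)]
    nlinarith [sq_nonneg (sigmoid z - 1 / 2)]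
  have := convex_univ.norm_image_sub_le_of_norm_deriv_le (fun z _ => differentiable_sigmoid z)
    (fun z _ => hderiv z) (Set.mem_univ y) (Set.mem_univ x)
  simp only [Real.norm_eq_abs] at this
  linarith

lemma abs_logistic_sub_half_le (x : ℝ) : |logistic x - 1 / 2| ≤ |x| / 4 := by
  simpa [logistic_eq_sigmoid, sigmoid_zero] using abs_sigmoid_sub_sigmoid_le x 0

lemma abs_le_abs_sub_of_sgn_ne {s h : ℝ} (hne : sgn h ≠ sgn s) : |s| ≤ |h - s| := by
  unfold sgn at hne
  split_ifs at hne with hh hs hs <;> norm_num at hne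
  · rw [abs_of_neg (not_le.mp hs), abs_of_nonneg (by linarith)]; linarith
  · rw [abs_of_nonneg hs, abs_of_neg (by linarith)]; linarith

/-- Probability of misclassifying a label `Y = ±1` with `P(Y = 1) = p` by the prediction `t`. -/
noncomputable def condRisk (p t : ℝ) : ℝ :=
  p * (if t = 1 then 0 else 1) + (1 - p) * (if t = -1 then 0 else 1)

lemma condRisk_sgn_sub_condRisk_sgn (s h : ℝ) :
    condRisk (logistic s) (sgn h) - condRisk (logistic s) (sgn s) =
      if sgn h = sgn s then 0 else 2 * |logistic s - 1 / 2| := by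
  have hmono : Monotone logistic := logistic_eq_sigmoid ▸ sigmoid_monotone
  have hzero : logistic 0 = 1 / 2 := by rw [logistic_eq_sigmoid, sigmoid_zero]; norm_num
  by_cases hh : 0 ≤ h <;> by_cases hs : 0 ≤ s <;> norm_num [condRisk, sgn, hh, hs]
  · have := hzero ▸ hmono (not_le.mp hs).le
    rw [abs_of_nonpos (by linarith)]; ring
  · have := hzero ▸ hmono hs
    rw [abs_of_nonneg (by linarith)]; ring

lemma condRisk_sgn_sub_condRisk_sgn_le_abs (s h : ℝ) :
    condRisk (logistic s) (sgn h) - condRisk (logistic s) (sgn s) ≤ |h - s| / 2 := by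
  rw [condRisk_sgn_sub_condRisk_sgn]
  split_ifs with heq
  · positivity
  · linarith [abs_logistic_sub_half_le s, abs_le_abs_sub_of_sgn_ne heq]

lemma condRisk_sgn_sub_condRisk_sgn_le_sq {c s : ℝ} (hc : 0 < c)
    (hnoise : 1 / (2 * c) ≤ |logistic s - 1 / 2|) (h : ℝ) :
    condRisk (logistic s) (sgn h) - condRisk (logistic s) (sgn s) ≤ c * (h - s) ^ 2 / 4 := by
  rw [condRisk_sgn_sub_condRisk_sgn]
  split_ifs with heq
  · positivity
  set a := |logistic s - 1 / 2|
  have ha : 1 ≤ 2 * c * a := by rwa [div_le_iff₀ (by positivity), mul_comm] at hnoise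
  have has : a ≤ |s| / 4 := abs_logistic_sub_half_le s
  have hsq : s ^ 2 ≤ (h - s) ^ 2 := sq_le_sq.mpr (abs_le_abs_sub_of_sgn_ne heq)
  calc 2 * a ≤ 2 * a * (2 * c * a) := le_mul_of_one_le_right (by positivity) ha
    _ = 4 * c * a ^ 2 := by ring
    _ ≤ 4 * c * (|s| / 4) ^ 2 := by gcongr
    _ = c * s ^ 2 / 4 := by rw [div_pow, sq_abs]; ring
    _ ≤ c * (h - s) ^ 2 / 4 := by gcongr

section Matrix

variable {m₁ m₂ : ℕ}

lemma risk_sub_risk (Xs : Matrix (Fin m₁) (Fin m₂) ℝ) (η η' : Fin m₁ → Fin m₂ → ℝ) :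
    Risk Xs η - Risk Xs η' = (1 / (m₁ * m₂ : ℝ)) * ∑ i, ∑ j,
      (condRisk (logistic (Xs i j)) (η i j) - condRisk (logistic (Xs i j)) (η' i j)) := by
  simp only [Risk, condRisk, ← mul_sub, ← sum_sub_distrib]

lemma frobeniusNorm_nonneg (X : Matrix (Fin m₁) (Fin m₂) ℝ) : 0 ≤ frobeniusNorm X :=
  sqrt_nonneg _

lemma frobeniusNorm_sq (X : Matrix (Fin m₁) (Fin m₂) ℝ) :
    frobeniusNorm X ^ 2 = ∑ i, ∑ j, X i j ^ 2 :=
  sq_sqrt (by positivity)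

lemma sum_abs_le_sqrt_mul_frobeniusNorm (X : Matrix (Fin m₁) (Fin m₂) ℝ) :
    ∑ i, ∑ j, |X i j| ≤ √(m₁ * m₂ : ℝ) * frobeniusNorm X := by
  have hcs := sq_sum_le_card_mul_sum_sq (s := (univ : Finset (Fin m₁ × Fin m₂)))
    (f := fun p => |X p.1 p.2|)
  simp only [card_univ, Fintype.card_prod, Fintype.card_fin, Fintype.sum_prod_type, sq_abs,
    Nat.cast_mul] at hcs
  rw [frobeniusNorm, ← sqrt_mul (by positivity), le_sqrt (by positivity) (by positivity)]
  exact hcs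

lemma risk_sgn_sub_risk_sgn_le_frobeniusNorm (Xs Xh : Matrix (Fin m₁) (Fin m₂) ℝ) :
    Risk Xs (fun i j => sgn (Xh i j)) - Risk Xs (fun i j => sgn (Xs i j)) ≤
      1 / (2 * √(m₁ * m₂ : ℝ)) * frobeniusNorm (Xh - Xs) := by
  set N : ℝ := m₁ * m₂
  calc _ ≤ 1 / N * ∑ i, ∑ j, 2⁻¹ * |(Xh - Xs) i j| := by
        rw [risk_sub_risk]
        gcongr with i _ j _
        exact (condRisk_sgn_sub_condRisk_sgn_le_abs _ _).trans_eq (div_eq_inv_mul _ _)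
    _ ≤ 1 / N * (2⁻¹ * (√N * frobeniusNorm (Xh - Xs))) := by
        simp only [← mul_sum]
        gcongr
        exact sum_abs_le_sqrt_mul_frobeniusNorm _
    _ = 1 / 2 * (√N / N) * frobeniusNorm (Xh - Xs) := by ring
    _ = 1 / (2 * √N) * frobeniusNorm (Xh - Xs) := by rw [sqrt_div_self']; ring

lemma risk_sgn_sub_risk_sgn_le_frobeniusNorm_sq {c : ℝ} (hc : 0 < c)
    (Xs Xh : Matrix (Fin m₁) (Fin m₂) ℝ)
    (hnoise : ∀ i j, 1 / (2 * c) ≤ |logistic (Xs i j) - 1 / 2|) :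
    Risk Xs (fun i j => sgn (Xh i j)) - Risk Xs (fun i j => sgn (Xs i j)) ≤
      c / (4 * (m₁ * m₂ : ℝ)) * frobeniusNorm (Xh - Xs) ^ 2 := by
  calc _ ≤ 1 / (m₁ * m₂ : ℝ) * ∑ i, ∑ j, c / 4 * (Xh - Xs) i j ^ 2 := by
        rw [risk_sub_risk]
        gcongr with i _ j _
        exact (condRisk_sgn_sub_condRisk_sgn_le_sq hc (hnoise i j) _).trans_eq
          (by rw [Matrix.sub_apply]; ring)
    _ = _ := by
        simp only [frobeniusNorm_sq, ← mul_sum]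
        ring

end Matrix

theorem excess_risk_from_estimation_error {m₁ m₂ : ℕ} (Xs Xh : Matrix (Fin m₁) (Fin m₂) ℝ)
    (ε : ℝ) (hest : (1 / (m₁ * m₂ : ℝ)) * frobeniusNorm (Xh - Xs) ^ 2 ≤ ε) :
    Risk Xs (fun i j => sgn (Xh i j)) - Risk Xs (fun i j => sgn (Xs i j)) ≤
        (1 / 2) * Real.sqrt ε ∧
      ∀ c : ℝ, 0 < c → (∀ i j, 1 / (2 * c) ≤ |logistic (Xs i j) - 1 / 2|) →
        Risk Xs (fun i j => sgn (Xh i j)) - Risk Xs (fun i j => sgn (Xs i j)) ≤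
          c / 4 * ε := by
  set N : ℝ := m₁ * m₂
  refine ⟨?_, fun c hc hnoise => ?_⟩
  · calc _ ≤ 1 / (2 * √N) * frobeniusNorm (Xh - Xs) :=
          risk_sgn_sub_risk_sgn_le_frobeniusNorm Xs Xh
      _ = 1 / 2 * √(1 / N * frobeniusNorm (Xh - Xs) ^ 2) := by
          rw [sqrt_mul' _ (sq_nonneg _), sqrt_sq (frobeniusNorm_nonneg _),
            sqrt_div' _ (by positivity), sqrt_one]
          ring
      _ ≤ 1 / 2 * √ε := by gcongr
  · calc _ ≤ c / (4 * N) * frobeniusNorm (Xh - Xs) ^ 2 :=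
          risk_sgn_sub_risk_sgn_le_frobeniusNorm_sq hc Xs Xh hnoise
      _ = c / 4 * (1 / N * frobeniusNorm (Xh - Xs) ^ 2) := by ring
      _ ≤ c / 4 * ε := by gcongr
end
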